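/- In the equal signal strength model with Σ = I_p, for any index j with b_j ≠ 0: |η_j^{(os)}| = √n·|b₀|/σ, and |η_j^{(ts)}| ≤ min{ √(min(n, ñ)/s), √n·|b₀|/σ }, where η_j^{(os)} = √n·b_j/σ and η_j^{(ts)} = √n·b_j / √( (bᵀb + b_j²)·(1 + n/ñ) + σ² ). -/

import Mathlib

open MeasureTheory ProbabilityTheory Filter Matrix Real Topology
open scoped ENNReal NNReal

noncomputable section

namespace ProxyData

def l0 {p : ℕ} (v : Fin p → ℝ) : ℕ := (Function.support v).ncard

def l1 {p : ℕ} (v : Fin p → ℝ) : ℝ := ∑ i, |v i|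

def l2sq {p : ℕ} (v : Fin p → ℝ) : ℝ := ∑ i, (v i) ^ 2

def linf {p : ℕ} (v : Fin p → ℝ) : ℝ := ⨆ i, |v i|

def gaussianVec {p : ℕ} (S : Matrix (Fin p) (Fin p) ℝ) (hS : S.PosSemidef) :
    Measure (Fin p → ℝ) :=
  (Measure.pi fun _ : Fin p => gaussianReal 0 1).map fun z =>
    (hS.1.eigenvectorUnitary.1 * diagonal ((↑) ∘ (√·) ∘ hS.1.eigenvalues) *
      (star hS.1.eigenvectorUnitary : Matrix (Fin p) (Fin p) ℝ)) *ᵥ z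

def EigBounds {p : ℕ} (S : Matrix (Fin p) (Fin p) ℝ) (C₁ : ℝ) : Prop :=
  S.IsSymm ∧ ∀ v : Fin p → ℝ, C₁⁻¹ * l2sq v ≤ v ⬝ᵥ S *ᵥ v ∧ v ⬝ᵥ S *ᵥ v ≤ C₁ * l2sq v

def SubGaussianLaw (ν : Measure ℝ) (K : ℝ) : Prop :=
  ∀ l : ℕ, 1 ≤ l → (∫ x, |x| ^ l ∂ν) ^ ((l : ℝ)⁻¹) ≤ K * Real.sqrt l

def NoiseLaw (ν : Measure ℝ) (σ K : ℝ) : Prop :=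
  IsProbabilityMeasure ν ∧ Integrable (fun x => x) ν ∧ Integrable (fun x => x ^ 2) ν ∧
    (∫ x, x ∂ν) = 0 ∧ (∫ x, x ^ 2 ∂ν) = σ ^ 2 ∧ SubGaussianLaw ν K

abbrev SampleSpace (p n m : ℕ) :=
  (Fin n → Fin p → ℝ) × (Fin n → ℝ) × (Fin m → Fin p → ℝ)

def modelMeasure {p : ℕ} (n m : ℕ) (S : Matrix (Fin p) (Fin p) ℝ) (hS : S.PosSemidef)
    (ν : Measure ℝ) : Measure (SampleSpace p n m) :=
  (Measure.pi fun _ : Fin n => gaussianVec S hS).prod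
    ((Measure.pi fun _ : Fin n => ν).prod (Measure.pi fun _ : Fin m => gaussianVec S hS))

def yVal {p n m : ℕ} (β : Fin p → ℝ) (ω : SampleSpace p n m) (i : Fin n) : ℝ :=
  (∑ j, ω.1 i j * β j) + ω.2.1 i

def Shat {p n m : ℕ} (β : Fin p → ℝ) (ω : SampleSpace p n m) : Fin p → ℝ :=
  fun j => (∑ i, ω.1 i j * yVal β ω i) / n

def SigTilde {p n m : ℕ} (ω : SampleSpace p n m) : Matrix (Fin p) (Fin p) ℝ :=
  fun j k => (∑ i, ω.2.2 i j * ω.2.2 i k) / m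

def gammaNN {p : ℕ} (S : Matrix (Fin p) (Fin p) ℝ) (β : Fin p → ℝ) (σ : ℝ) (n m : ℕ) : ℝ :=
  σ ^ 2 + (β ⬝ᵥ S *ᵥ β) * ((n : ℝ) / m + 1)

def lassoObj {p : ℕ} (A : Matrix (Fin p) (Fin p) ℝ) (s : Fin p → ℝ) (lam : ℝ)
    (b : Fin p → ℝ) : ℝ :=
  (1 / 2) * (b ⬝ᵥ A *ᵥ b) - b ⬝ᵥ s + lam * l1 b

def IsLassoSol {p : ℕ} (A : Matrix (Fin p) (Fin p) ℝ) (s : Fin p → ℝ) (lam : ℝ)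
    (bhat : Fin p → ℝ) : Prop :=
  ∀ b, lassoObj A s lam bhat ≤ lassoObj A s lam b

def DantzigFeas {p : ℕ} (A : Matrix (Fin p) (Fin p) ℝ) (t : Fin p → ℝ) (lam : ℝ)
    (w : Fin p → ℝ) : Prop :=
  linf (fun i => (A *ᵥ w) i - t i) ≤ lam

def IsDantzigSol {p : ℕ} (A : Matrix (Fin p) (Fin p) ℝ) (t : Fin p → ℝ) (lam : ℝ)
    (w : Fin p → ℝ) : Prop :=
  DantzigFeas A t lam w ∧ ∀ w', DantzigFeas A t lam w' → l1 w ≤ l1 w'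

def stdNormalCDF (t : ℝ) : ℝ := (gaussianReal 0 1 (Set.Iic t)).toReal

def BigOP {Ωs : ℕ → Type*} [∀ k, MeasurableSpace (Ωs k)] (μ : ∀ k, Measure (Ωs k))
    (X : ∀ k, Ωs k → ℝ) (r : ℕ → ℝ) : Prop :=
  ∀ ε : ℝ, 0 < ε → ∃ C : ℝ, 0 < C ∧
    ∀ᶠ k in atTop, (μ k {ω | C * r k < |X k ω|}).toReal ≤ ε

def TendstoStdNormal {Ωs : ℕ → Type*} [∀ k, MeasurableSpace (Ωs k)] (μ : ∀ k, Measure (Ωs k))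
    (X : ∀ k, Ωs k → ℝ) : Prop :=
  ∀ t : ℝ, Tendsto (fun k => (μ k {ω | X k ω ≤ t}).toReal) atTop (𝓝 (stdNormalCDF t))

def omegaCol {p : ℕ} (S : Matrix (Fin p) (Fin p) ℝ) (j : Fin p) : Fin p → ℝ := fun i => S⁻¹ i j

def zstat {p n m : ℕ} (S : Matrix (Fin p) (Fin p) ℝ) (β : Fin p → ℝ) (j : Fin p)
    (ω : SampleSpace p n m) : ℝ :=
  omegaCol S j ⬝ᵥ (fun i => Shat β ω i - (S *ᵥ β) i)
    + omegaCol S j ⬝ᵥ ((S - SigTilde ω) *ᵥ β)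

def Vts {p : ℕ} (S : Matrix (Fin p) (Fin p) ℝ) (β : Fin p → ℝ) (σ : ℝ) (n m : ℕ)
    (j : Fin p) : ℝ :=
  S⁻¹ j j * gammaNN S β σ n m / n + (β j) ^ 2 / n + (β j) ^ 2 / m

theorem abs_eq_abs_of_eq_neg_or_eq_zero_or_eq {α : Type*} [AddCommGroup α] [LinearOrder α]
    [IsOrderedAddMonoid α] {x a : α} (h : x = -a ∨ x = 0 ∨ x = a) (hx : x ≠ 0) : |x| = |a| := by
  rcases h with rfl | rfl | rfl
  · exact abs_neg a
  · exact absurd rfl hx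
  · rfl

theorem dotProduct_self_eq_ncard_support_mul_sq {ι : Type*} [Fintype ι] {b : ι → ℝ} {c : ℝ}
    (h : ∀ i, b i ≠ 0 → |b i| = c) : b ⬝ᵥ b = (Function.support b).ncard * c ^ 2 := by
  classical
  have hsupport : Function.support b = ↑(Finset.univ.filter fun i => b i ≠ 0) := by
    ext i; simp
  calc b ⬝ᵥ b = ∑ i ∈ Finset.univ.filter (fun i => b i ≠ 0), b i * b i :=
        (Finset.sum_filter_of_ne fun _ _ hi => left_ne_zero_of_mul hi).symm
    _ = ∑ i ∈ Finset.univ.filter (fun i => b i ≠ 0), c ^ 2 := by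
        refine Finset.sum_congr rfl fun i hi => ?_
        rw [← h i (Finset.mem_filter.1 hi).2, sq_abs, sq]
    _ = (Function.support b).ncard * c ^ 2 := by
        rw [Finset.sum_const, nsmul_eq_mul, hsupport, Set.ncard_coe_finset]

theorem le_min_mul_one_add_div {n m : ℝ} (hn : 0 ≤ n) (hm : 0 < m) :
    n ≤ min n m * (1 + n / m) := by
  rcases le_total n m with hnm | hmn
  · rw [min_eq_left hnm]
    nlinarith [div_nonneg hn hm.le]
  · rw [min_eq_right hmn, mul_add, mul_div_cancel₀ n hm.ne']
    linarith

theorem mul_le_min_mul_of_mul_one_add_div_le {n m B D : ℝ} (hn : 0 ≤ n) (hm : 0 < m)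
    (hB : 0 ≤ B) (hD : B * (1 + n / m) ≤ D) : n * B ≤ min n m * D :=
  calc n * B ≤ min n m * (1 + n / m) * B :=
        mul_le_mul_of_nonneg_right (le_min_mul_one_add_div hn hm) hB
    _ = min n m * (B * (1 + n / m)) := by ring
    _ ≤ min n m * D := mul_le_mul_of_nonneg_left hD (le_min hn hm.le)

theorem sqrt_mul_div_sqrt_le_sqrt_div {n x D t s : ℝ} (hn : 0 ≤ n) (hx : 0 ≤ x) (hD : 0 < D)
    (hs : 0 < s) (h : n * (s * x ^ 2) ≤ t * D) : √n * x / √D ≤ √(t / s) := by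
  rw [← sqrt_sq hx, ← sqrt_mul hn, ← sqrt_div' _ hD.le]
  refine sqrt_le_sqrt ?_
  rw [div_le_div_iff₀ hD hs]
  linarith

-- The two-stage denominator dominates both `σ²` and `s b₀² (1 + n/ñ)`, which give the two
-- truncation levels.
theorem statement_7_general {p : ℕ} (n m : ℕ) (hm : 0 < m)
    (b : Fin p → ℝ) (b₀ : ℝ) (s : ℕ) (hs : 1 ≤ s)
    (σ : ℝ) (hσ : 0 < σ) (j : Fin p)
    (hmodel : ∀ i, b i = -b₀ ∨ b i = 0 ∨ b i = b₀)
    (hsupp : (Function.support b).ncard = s)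
    (hj : b j ≠ 0) :
    |Real.sqrt n * b j / σ| = Real.sqrt n * |b₀| / σ ∧
    |Real.sqrt n * b j /
        Real.sqrt ((b ⬝ᵥ b + (b j) ^ 2) * (1 + (n : ℝ) / m) + σ ^ 2)|
      ≤ min (Real.sqrt ((min n m : ℝ) / s)) (Real.sqrt n * |b₀| / σ) := by
  have hbj : |b j| = |b₀| := abs_eq_abs_of_eq_neg_or_eq_zero_or_eq (hmodel j) hj
  have hbb : b ⬝ᵥ b = s * |b₀| ^ 2 := by
    rw [← hsupp]
    exact dotProduct_self_eq_ncard_support_mul_sq fun i hi =>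
      abs_eq_abs_of_eq_neg_or_eq_zero_or_eq (hmodel i) hi
  set D := (b ⬝ᵥ b + (b j) ^ 2) * (1 + (n : ℝ) / m) + σ ^ 2
  have hmain : b ⬝ᵥ b * (1 + (n : ℝ) / m) ≤ D := by
    have : 0 ≤ (b j) ^ 2 * (1 + (n : ℝ) / m) + σ ^ 2 := by positivity
    linarith
  have hσD : σ ^ 2 ≤ D := by
    have : 0 ≤ (b ⬝ᵥ b + (b j) ^ 2) * (1 + (n : ℝ) / m) := by rw [hbb]; positivity
    linarith
  have hD : 0 < D := (pow_pos hσ 2).trans_le hσD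
  rw [abs_div, abs_div, abs_mul, abs_of_nonneg (sqrt_nonneg _), abs_of_pos hσ,
    abs_of_pos (sqrt_pos.2 hD), hbj]
  refine ⟨rfl, le_min ?_ ?_⟩
  · refine sqrt_mul_div_sqrt_le_sqrt_div n.cast_nonneg (abs_nonneg b₀) hD
      (by exact_mod_cast hs) ?_
    rw [← hbb]
    exact mul_le_min_mul_of_mul_one_add_div_le n.cast_nonneg (by exact_mod_cast hm)
      (dotProduct_self_star_nonneg b) hmain
  · refine div_le_div_of_nonneg_left (by positivity) hσ ?_
    simpa [sqrt_sq hσ.le] using sqrt_le_sqrt hσD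

/-- Corollary 1 of the paper: power truncation in the equal signal
strength model with `Σ = I_p`. If every coordinate of `b` lies in `{−b₀, 0, b₀}`,
`‖b‖₀ = s ≥ 1`, and `b_j ≠ 0`, then `|η_j^{(os)}| = √n·|b₀|/σ` and
`|η_j^{(ts)}| ≤ min{√(min(n,ñ)/s), √n·|b₀|/σ}`. -/
theorem statement_7 {p : ℕ} (n m : ℕ) (hn : 0 < n) (hm : 0 < m)
    (b : Fin p → ℝ) (b₀ : ℝ) (hb₀ : b₀ ≠ 0) (s : ℕ) (hs : 1 ≤ s)
    (σ : ℝ) (hσ : 0 < σ) (j : Fin p)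
    (hmodel : ∀ i, b i = -b₀ ∨ b i = 0 ∨ b i = b₀)
    (hsupp : (Function.support b).ncard = s)
    (hj : b j ≠ 0) :
    |Real.sqrt n * b j / σ| = Real.sqrt n * |b₀| / σ ∧
    |Real.sqrt n * b j /
        Real.sqrt ((b ⬝ᵥ b + (b j) ^ 2) * (1 + (n : ℝ) / m) + σ ^ 2)|
      ≤ min (Real.sqrt ((min n m : ℝ) / s)) (Real.sqrt n * |b₀| / σ) :=
  statement_7_general n m hm b b₀ s hs σ hσ j hmodel hsupp hj

end ProxyData
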